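/- Let P = (R, G) be a skew partial field, C a P-chain group on a finite set E, and B a basis of the matroid M(C). Suppose that for each e ∈ B, a^e ∈ C is a G-primitive chain whose support ‖a^e‖ is the B-fundamental cocircuit of M(C) containing e. Then the set C_B := {a^e : e ∈ B} generates C as a left R-module (every c ∈ C can be written c = Σ_{e∈B} p_e·a^e with p_e ∈ R), and no proper subset of C_B generates C. -/

import Mathlib

open Matrix Matroid

/-- The support of a chain `c : E → R`. -/
def chainSupport {R E : Type*} [Zero R] (c : E → R) : Set E := {e | c e ≠ 0}

/-- A chain of the chain group `C` is *elementary* if it is nonzero and no nonzero chain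
of `C` has strictly smaller support. -/
def IsElementary {R E : Type*} [Zero R] (C : Set (E → R)) (c : E → R) : Prop :=
  c ∈ C ∧ c ≠ 0 ∧ ∀ c' ∈ C, c' ≠ (0 : E → R) → ¬ (chainSupport c' ⊂ chainSupport c)

/-- A chain is `G`-primitive if all of its entries lie in `G ∪ {0}`. -/
def IsPrimitive {R E : Type*} [MonoidWithZero R] (G : Subgroup Rˣ) (c : E → R) : Prop :=
  ∀ e, c e = 0 ∨ ∃ g ∈ G, c e = ((g : Rˣ) : R)

/-- `C` is a chain group over the skew partial field `(R, G)` if every elementary chain of `C`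
is a left `R`-multiple of a `G`-primitive chain of `C`. -/
def IsPChainGroup {R E : Type*} [Ring R] (G : Subgroup Rˣ) (C : Submodule R (E → R)) : Prop :=
  ∀ c, IsElementary (C : Set (E → R)) c →
    ∃ r : R, ∃ c' ∈ C, IsPrimitive G c' ∧ c = r • c'

/-- A circuit of a matroid: a minimal dependent set. -/
def IsCircuit {E : Type*} (M : Matroid E) (X : Set E) : Prop :=
  ¬ M.Indep X ∧ ∀ Y, Y ⊂ X → M.Indep Y

/-- A cocircuit of a matroid: a circuit of the dual matroid. -/
def IsCocircuit {E : Type*} (M : Matroid E) (X : Set E) : Prop :=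
  _root_.IsCircuit M✶ X

/-- `M` is "the" matroid `M(C)` of the chain group `C`: the ground set of `M` is all of `E`,
and the cocircuits of `M` are exactly the supports of the elementary chains of `C`. -/
def IsMatroidOf {R E : Type*} [Zero R] (M : Matroid E) (C : Set (E → R)) : Prop :=
  M.E = Set.univ ∧
    ∀ X : Set E, _root_.IsCocircuit M X ↔ ∃ c, IsElementary C c ∧ chainSupport c = X

/-- The row span `{z ⬝ A : z ∈ R^X}` of a matrix, as a left `R`-submodule of `E → R`. -/
def rowSpan {R X E : Type*} [Ring R] [Fintype X] (A : Matrix X E R) :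
    Submodule R (E → R) where
  carrier := {c | ∃ z : X → R, c = z ᵥ* A}
  add_mem' := by rintro a b ⟨z, rfl⟩ ⟨w, rfl⟩; exact ⟨z + w, (Matrix.add_vecMul A z w).symm⟩
  zero_mem' := ⟨0, (Matrix.zero_vecMul A).symm⟩
  smul_mem' := by rintro r c ⟨z, rfl⟩; exact ⟨r • z, (Matrix.smul_vecMul r z A).symm⟩

/-- The deletion of `D` from the matroid `M`. -/
noncomputable def matroidDelete {α : Type*} (M : Matroid α) (D : Set α) : Matroid α :=
  M ↾ (M.E \ D)

/-- The contraction of `D` in the matroid `M`. -/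
noncomputable def matroidContract {α : Type*} (M : Matroid α) (D : Set α) : Matroid α :=
  (M✶ ↾ (M✶.E \ D))✶

/-- The matroid `M` has rank `n`. -/
def RankEq {α : Type*} (M : Matroid α) (n : ℕ) : Prop :=
  ∃ B, M.IsBase B ∧ B.ncard = n

/-!
Since `Bᶜ` is a basis of the dual matroid, every cocircuit of `M(C)` meets `B`; as every nonzero
chain of `C` contains the support of an elementary chain, a chain of `C` vanishing on `B` is zero.
The fundamental chain `a e` vanishes on `B ∖ {e}` and `a e e` is a unit, so
`c - ∑_{e ∈ B} c e (a e e)⁻¹ • a e` lies in `C` and vanishes on `B`, hence is zero.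
Conversely, if `a f` is missing from `S ⊆ C_B`, every chain in the span of `S` vanishes at `f`,
while `a f` does not.
-/
theorem exists_isElementary_chainSupport_subset {R E : Type*} [Zero R] [Finite E]
    {C : Set (E → R)} {c : E → R} (hc : c ∈ C) (hne : c ≠ 0) :
    ∃ d, IsElementary C d ∧ chainSupport d ⊆ chainSupport c := by
  obtain ⟨d, ⟨hdC, hd0, hdc⟩, hmin⟩ :=
    (InvImage.wf chainSupport wellFounded_lt).has_min
      {d | d ∈ C ∧ d ≠ 0 ∧ chainSupport d ⊆ chainSupport c} ⟨c, hc, hne, subset_rfl⟩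
  exact ⟨d, ⟨hdC, hd0, fun d' hd'C hd'0 hlt =>
    hmin d' ⟨hd'C, hd'0, hlt.subset.trans hdc⟩ hlt⟩, hdc⟩

theorem IsCocircuit.inter_nonempty_of_isBase {E : Type*} {M : Matroid E} {B X : Set E}
    (hE : M.E = Set.univ) (hB : M.IsBase B) (hX : _root_.IsCocircuit M X) :
    (X ∩ B).Nonempty := by
  have hBc : M✶.IsBase Bᶜ := by
    simpa [hE, ← Set.compl_eq_univ_sdiff] using hB.compl_isBase_dual
  by_contra hXB
  exact hX.1 (hBc.indep.subset fun x hxX hxB => hXB ⟨x, hxX, hxB⟩)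

theorem IsMatroidOf.eq_zero_of_forall_mem_isBase {R E : Type*} [Zero R] [Finite E]
    {M : Matroid E} {C : Set (E → R)} {B : Set E} (hM : IsMatroidOf M C) (hB : M.IsBase B)
    {c : E → R} (hc : c ∈ C) (hcB : ∀ f ∈ B, c f = 0) : c = 0 := by
  by_contra hne
  obtain ⟨d, hd, hdc⟩ := exists_isElementary_chainSupport_subset hc hne
  obtain ⟨f, hfd, hfB⟩ :=
    IsCocircuit.inter_nonempty_of_isBase hM.1 hB ((hM.2 _).mpr ⟨d, hd, rfl⟩)
  exact hdc hfd (hcB f hfB)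

section Diagonal

variable {R E : Type*} [Ring R] {B : Set E} {a : E → E → R}

theorem sum_smul_apply_of_diagonal (hB : B.Finite)
    (hoff : ∀ e ∈ B, ∀ f ∈ B, e ≠ f → a e f = 0) (r : E → R) {f : E} (hf : f ∈ B) :
    (∑ e ∈ hB.toFinset, r e • a e) f = r f * a f f := by
  rw [Finset.sum_apply, Finset.sum_eq_single f]
  · rfl
  · intro e he hef
    simp [hoff e (hB.mem_toFinset.mp he) f hf hef]
  · exact fun hf' => (hf' (hB.mem_toFinset.mpr hf)).elim

theorem span_image_eq_of_diagonal_isUnit {C : Submodule R (E → R)} (hB : B.Finite)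
    (haC : ∀ e ∈ B, a e ∈ C) (hdiag : ∀ e ∈ B, IsUnit (a e e))
    (hoff : ∀ e ∈ B, ∀ f ∈ B, e ≠ f → a e f = 0)
    (hC : ∀ c ∈ C, (∀ f ∈ B, c f = 0) → c = 0) :
    Submodule.span R (a '' B) = C := by
  refine le_antisymm (Submodule.span_le.mpr ?_) fun c hc => ?_
  · rintro _ ⟨e, he, rfl⟩
    exact haC e he
  · set r : E → R := fun e => c e * Ring.inverse (a e e)
    have hmem : ∑ e ∈ hB.toFinset, r e • a e ∈ C :=
      C.sum_mem fun e he => C.smul_mem _ (haC e (hB.mem_toFinset.mp he))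
    have hsum : c - ∑ e ∈ hB.toFinset, r e • a e = 0 :=
      hC _ (C.sub_mem hc hmem) fun f hf => by
        rw [Pi.sub_apply, sum_smul_apply_of_diagonal hB hoff r hf, mul_assoc,
          Ring.inverse_mul_cancel _ (hdiag f hf), mul_one, sub_self]
    rw [sub_eq_zero.mp hsum]
    exact Submodule.sum_mem _ fun e he =>
      Submodule.smul_mem _ _ (Submodule.subset_span ⟨e, hB.mem_toFinset.mp he, rfl⟩)

theorem span_ne_of_ssubset_image_of_diagonal {C : Submodule R (E → R)}
    (haC : ∀ e ∈ B, a e ∈ C) (hdiag : ∀ e ∈ B, a e e ≠ 0)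
    (hoff : ∀ e ∈ B, ∀ f ∈ B, e ≠ f → a e f = 0) {S : Set (E → R)} (hS : S ⊂ a '' B) :
    Submodule.span R S ≠ C := by
  intro hSC
  obtain ⟨_, ⟨f, hf, rfl⟩, hfS⟩ := Set.exists_of_ssubset hS
  have hker : Submodule.span R S ≤ LinearMap.ker (LinearMap.proj (φ := fun _ : E => R) f) := by
    rw [Submodule.span_le]
    intro y hy
    obtain ⟨e, he, rfl⟩ := hS.subset hy
    have hef : e ≠ f := by rintro rfl; exact hfS hy
    simp [hoff e he f hf hef]
  exact hdiag f hf (by simpa using hker (hSC ▸ haC f hf))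

end Diagonal

theorem statement7_general {R E : Type*} [Ring R] [Fintype E]
    (G : Subgroup Rˣ)
    (C : Submodule R (E → R))
    (M : Matroid E) (hM : IsMatroidOf M (C : Set (E → R)))
    (B : Set E) (hB : M.IsBase B)
    (a : E → (E → R))
    (ha : ∀ e ∈ B, a e ∈ C ∧ IsPrimitive G (a e) ∧
      _root_.IsCocircuit M (chainSupport (a e)) ∧ e ∈ chainSupport (a e) ∧
      chainSupport (a e) ⊆ Bᶜ ∪ {e}) :
    Submodule.span R (a '' B) = C ∧
      ∀ S ⊂ a '' B, Submodule.span R S ≠ C := by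
  have haC : ∀ e ∈ B, a e ∈ C := fun e he => (ha e he).1
  have hoff : ∀ e ∈ B, ∀ f ∈ B, e ≠ f → a e f = 0 := fun e he f hf hef => by
    by_contra hfe
    rcases (ha e he).2.2.2.2 hfe with hfB | rfl
    exacts [hfB hf, hef rfl]
  have hdiag : ∀ e ∈ B, IsUnit (a e e) := fun e he => by
    obtain ⟨g, -, hg⟩ := ((ha e he).2.1 e).resolve_left (ha e he).2.2.2.1
    exact hg ▸ g.isUnit
  exact ⟨span_image_eq_of_diagonal_isUnit B.toFinite haC hdiag hoff
      fun c hc => hM.eq_zero_of_forall_mem_isBase hB hc,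
    fun S => span_ne_of_ssubset_image_of_diagonal haC (fun e he => (ha e he).2.2.2.1) hoff⟩

/-- let `P = (R, G)` be a skew partial field, `C` a `P`-chain group on a finite
set `E` with matroid `M = M(C)`, `B` a basis of `M`, and for each `e ∈ B` let `a e` be a
`G`-primitive chain of `C` whose support is the `B`-fundamental cocircuit of `M` containing
`e` (the unique cocircuit contained in `(E ∖ B) ∪ {e}` and containing `e`).  Then
`C_B = {a e : e ∈ B}` generates `C`, and no proper subset of `C_B` generates `C`. -/
theorem statement7 {R E : Type*} [Ring R] [Fintype E]
    (G : Subgroup Rˣ) (hG : (-1 : Rˣ) ∈ G)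
    (C : Submodule R (E → R)) (hC : IsPChainGroup G C)
    (M : Matroid E) (hM : IsMatroidOf M (C : Set (E → R)))
    (B : Set E) (hB : M.IsBase B)
    (a : E → (E → R))
    (ha : ∀ e ∈ B, a e ∈ C ∧ IsPrimitive G (a e) ∧
      _root_.IsCocircuit M (chainSupport (a e)) ∧ e ∈ chainSupport (a e) ∧
      chainSupport (a e) ⊆ Bᶜ ∪ {e}) :
    Submodule.span R (a '' B) = C ∧
      ∀ S ⊂ a '' B, Submodule.span R S ≠ C :=
  statement7_general G C M hM B hB a ha
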